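/- arXiv:2507.01556 — 4 statements merged into one kernel-verified Lean document; each statement's English description precedes it below -/
import Mathlib

section
/- Let A be an n×n real matrix, B an n×m real matrix, C a p×n real matrix, Q a p×p real matrix, R an m×m real matrix, s ∈ ℝⁿ and r ∈ ℝᵐ. Define the stage cost φ(x,u) = |xᵀCᵀQCx + uᵀRu + sᵀx + rᵀu| and the value function V : ℝⁿ → [0,∞] by V(x) = inf over all input sequences u : ℕ → ℝᵐ of ∑_{k=0}^∞ φ(x_k, u_k), where x_0 = x and x_{k+1} = A x_k + B u_k. Suppose there exist an m×n real matrix K, a constant M > 0, and ρ ∈ (0,1) such that ‖(A + B K)^k x‖ ≤ M ρ^k ‖x‖ for all k ∈ ℕ and all x ∈ ℝⁿ. Then V(x) < ∞ for every x ∈ ℝⁿ. -/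
/-!
Feed back `u_k = K x_k`. The closed-loop trajectory is `x_k = (A + B K)^k x`, and along it the
stage cost is a quadratic-plus-linear function of the state alone, hence bounded by
`a ‖x_k‖² + b ‖x_k‖`. Exponential stability makes both `‖x_k‖` and `‖x_k‖²` dominated by
geometric series, so the cost of this particular input is finite, and so is the infimum `V x`.
-/

open scoped ENNReal Matrix

/-- The trajectory of the discrete-time linear system `x_{k+1} = A x_k + B u_k`
starting from `x0` under the input sequence `u`. -/
def traj {n m : ℕ} (A : Matrix (Fin n) (Fin n) ℝ) (B : Matrix (Fin n) (Fin m) ℝ)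
    (x0 : Fin n → ℝ) (u : ℕ → Fin m → ℝ) : ℕ → Fin n → ℝ
  | 0 => x0
  | k + 1 => A.mulVec (traj A B x0 u k) + B.mulVec (u k)

/-- The Euclidean norm of a vector in `Fin n → ℝ`. -/
noncomputable def euclidVecNorm {n : ℕ} (x : Fin n → ℝ) : ℝ :=
  ‖(EuclideanSpace.equiv (Fin n) ℝ).symm x‖

lemma euclidVecNorm_nonneg {n : ℕ} (x : Fin n → ℝ) : 0 ≤ euclidVecNorm x := norm_nonneg _

lemma abs_dotProduct_le_euclidVecNorm_mul {n : ℕ} (x y : Fin n → ℝ) :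
    |x ⬝ᵥ y| ≤ euclidVecNorm x * euclidVecNorm y := by
  have h := abs_real_inner_le_norm ((EuclideanSpace.equiv (Fin n) ℝ).symm x)
    ((EuclideanSpace.equiv (Fin n) ℝ).symm y)
  rwa [EuclideanSpace.inner_eq_star_dotProduct, star_trivial, dotProduct_comm] at h

lemma exists_euclidVecNorm_mulVec_le {a b : ℕ} (N : Matrix (Fin a) (Fin b) ℝ) :
    ∃ c : ℝ, ∀ x, euclidVecNorm (N *ᵥ x) ≤ c * euclidVecNorm x :=
  let f := LinearMap.toContinuousLinearMap (Matrix.toEuclideanLin N)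
  ⟨‖f‖, fun x => f.le_opNorm ((EuclideanSpace.equiv (Fin b) ℝ).symm x)⟩

lemma exists_abs_dotProduct_mulVec_add_dotProduct_le {n : ℕ} (P : Matrix (Fin n) (Fin n) ℝ)
    (t : Fin n → ℝ) :
    ∃ a b : ℝ, ∀ x, |x ⬝ᵥ P *ᵥ x + t ⬝ᵥ x| ≤ a * euclidVecNorm x ^ 2 + b * euclidVecNorm x := by
  obtain ⟨c, hc⟩ := exists_euclidVecNorm_mulVec_le P
  refine ⟨c, euclidVecNorm t, fun x => ?_⟩
  have hx := euclidVecNorm_nonneg x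
  calc |x ⬝ᵥ P *ᵥ x + t ⬝ᵥ x| ≤ |x ⬝ᵥ P *ᵥ x| + |t ⬝ᵥ x| := abs_add_le _ _
    _ ≤ euclidVecNorm x * euclidVecNorm (P *ᵥ x) + euclidVecNorm t * euclidVecNorm x :=
        add_le_add (abs_dotProduct_le_euclidVecNorm_mul _ _)
          (abs_dotProduct_le_euclidVecNorm_mul _ _)
    _ ≤ euclidVecNorm x * (c * euclidVecNorm x) + euclidVecNorm t * euclidVecNorm x := by
        gcongr; exact hc x
    _ = c * euclidVecNorm x ^ 2 + euclidVecNorm t * euclidVecNorm x := by ring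

lemma traj_feedback {n m : ℕ} (A : Matrix (Fin n) (Fin n) ℝ) (B : Matrix (Fin n) (Fin m) ℝ)
    (K : Matrix (Fin m) (Fin n) ℝ) (x : Fin n → ℝ) (k : ℕ) :
    traj A B x (fun j => K *ᵥ ((A + B * K) ^ j *ᵥ x)) k = (A + B * K) ^ k *ᵥ x := by
  induction k with
  | zero => simp [traj]
  | succ k ih =>
    rw [traj, ih]
    simp only [Matrix.mulVec_mulVec]
    rw [← Matrix.add_mulVec, pow_succ', Matrix.add_mul, Matrix.mul_assoc]

lemma stageCost_feedback {n m : ℕ} (W : Matrix (Fin n) (Fin n) ℝ) (R : Matrix (Fin m) (Fin m) ℝ)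
    (K : Matrix (Fin m) (Fin n) ℝ) (s : Fin n → ℝ) (r : Fin m → ℝ) (x : Fin n → ℝ) :
    x ⬝ᵥ W *ᵥ x + K *ᵥ x ⬝ᵥ R *ᵥ (K *ᵥ x) + s ⬝ᵥ x + r ⬝ᵥ K *ᵥ x =
      x ⬝ᵥ (W + Kᵀ * R * K) *ᵥ x + (s + Kᵀ *ᵥ r) ⬝ᵥ x := by
  rw [Matrix.add_mulVec, dotProduct_add, add_dotProduct, ← Matrix.mulVec_mulVec,
    ← Matrix.mulVec_mulVec, Matrix.dotProduct_mulVec x Kᵀ, Matrix.vecMul_transpose,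
    Matrix.dotProduct_mulVec r K, ← Matrix.mulVec_transpose]
  ring

lemma summable_quadratic_of_le_geometric {g : ℕ → ℝ} {c ρ : ℝ} (a b : ℝ)
    (hg0 : ∀ k, 0 ≤ g k) (hg : ∀ k, g k ≤ c * ρ ^ k) (hρ0 : 0 ≤ ρ) (hρ1 : ρ < 1) :
    Summable fun k => a * g k ^ 2 + b * g k := by
  have hgeom : Summable fun k => c * ρ ^ k := (summable_geometric_of_lt_one hρ0 hρ1).mul_left c
  have hsq : Summable fun k => c ^ 2 * (ρ ^ 2) ^ k :=
    (summable_geometric_of_lt_one (sq_nonneg ρ) (by nlinarith)).mul_left _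
  refine ((hsq.of_nonneg_of_le (fun k => sq_nonneg (g k)) fun k => ?_).mul_left a).add
    ((hgeom.of_nonneg_of_le hg0 hg).mul_left b)
  calc g k ^ 2 ≤ (c * ρ ^ k) ^ 2 := pow_le_pow_left₀ (hg0 k) (hg k) 2
    _ = c ^ 2 * (ρ ^ 2) ^ k := by ring

theorem value_function_finite_general {n m p : ℕ}
    (A : Matrix (Fin n) (Fin n) ℝ) (B : Matrix (Fin n) (Fin m) ℝ)
    (C : Matrix (Fin p) (Fin n) ℝ) (Q : Matrix (Fin p) (Fin p) ℝ)
    (R : Matrix (Fin m) (Fin m) ℝ) (s : Fin n → ℝ) (r : Fin m → ℝ)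
    (φ : (Fin n → ℝ) → (Fin m → ℝ) → ℝ)
    (hφ : ∀ (x : Fin n → ℝ) (u : Fin m → ℝ),
      φ x u = |x ⬝ᵥ (Cᵀ * Q * C).mulVec x + u ⬝ᵥ R.mulVec u + s ⬝ᵥ x + r ⬝ᵥ u|)
    (V : (Fin n → ℝ) → ℝ≥0∞)
    (hV : ∀ x : Fin n → ℝ,
      V x = ⨅ u : ℕ → Fin m → ℝ, ∑' k : ℕ, ENNReal.ofReal (φ (traj A B x u k) (u k)))
    (K : Matrix (Fin m) (Fin n) ℝ) (M : ℝ) (ρ : ℝ) (hρ0 : 0 < ρ) (hρ1 : ρ < 1)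
    (hstab : ∀ (k : ℕ) (x : Fin n → ℝ),
      euclidVecNorm (((A + B * K) ^ k).mulVec x) ≤ M * ρ ^ k * euclidVecNorm x) :
    ∀ x : Fin n → ℝ, V x < ∞ := by
  intro x
  set u : ℕ → Fin m → ℝ := fun k => K *ᵥ ((A + B * K) ^ k *ᵥ x)
  obtain ⟨a, b, hab⟩ :=
    exists_abs_dotProduct_mulVec_add_dotProduct_le (Cᵀ * Q * C + Kᵀ * R * K) (s + Kᵀ *ᵥ r)
  have hcost : ∀ k, φ (traj A B x u k) (u k) ≤
      a * euclidVecNorm ((A + B * K) ^ k *ᵥ x) ^ 2 + b * euclidVecNorm ((A + B * K) ^ k *ᵥ x) := by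
    intro k
    rw [hφ, traj_feedback, stageCost_feedback]
    exact hab _
  have hcost0 : ∀ k, 0 ≤ φ (traj A B x u k) (u k) := fun k => (hφ _ _).symm ▸ abs_nonneg _
  have hsummable : Summable fun k => φ (traj A B x u k) (u k) :=
    (summable_quadratic_of_le_geometric a b (fun k => euclidVecNorm_nonneg _)
      (fun k => (hstab k x).trans_eq (mul_right_comm _ _ _)) hρ0.le hρ1).of_nonneg_of_le
      hcost0 hcost
  rw [hV]
  refine (iInf_le _ u).trans_lt ?_
  rw [← ENNReal.ofReal_tsum_of_nonneg hcost0 hsummable]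
  exact ENNReal.ofReal_lt_top

theorem value_function_finite {n m p : ℕ}
    (A : Matrix (Fin n) (Fin n) ℝ) (B : Matrix (Fin n) (Fin m) ℝ)
    (C : Matrix (Fin p) (Fin n) ℝ) (Q : Matrix (Fin p) (Fin p) ℝ)
    (R : Matrix (Fin m) (Fin m) ℝ) (s : Fin n → ℝ) (r : Fin m → ℝ)
    (φ : (Fin n → ℝ) → (Fin m → ℝ) → ℝ)
    (hφ : ∀ (x : Fin n → ℝ) (u : Fin m → ℝ),
      φ x u = |x ⬝ᵥ (Cᵀ * Q * C).mulVec x + u ⬝ᵥ R.mulVec u + s ⬝ᵥ x + r ⬝ᵥ u|)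
    (V : (Fin n → ℝ) → ℝ≥0∞)
    (hV : ∀ x : Fin n → ℝ,
      V x = ⨅ u : ℕ → Fin m → ℝ, ∑' k : ℕ, ENNReal.ofReal (φ (traj A B x u k) (u k)))
    (K : Matrix (Fin m) (Fin n) ℝ) (M : ℝ) (hM : 0 < M) (ρ : ℝ) (hρ0 : 0 < ρ) (hρ1 : ρ < 1)
    (hstab : ∀ (k : ℕ) (x : Fin n → ℝ),
      euclidVecNorm (((A + B * K) ^ k).mulVec x) ≤ M * ρ ^ k * euclidVecNorm x) :
    ∀ x : Fin n → ℝ, V x < ∞ :=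
  value_function_finite_general A B C Q R s r φ hφ V hV K M ρ hρ0 hρ1 hstab
end

section
/- For every x ∈ ℝ with |x| ≤ 1/2, the function f(u) = x² + u² + |x − u| + 5(2x + u)² + 3|2x + u| attains its global minimum over u ∈ ℝ at u = −2x, and the minimum value equals 5x² + 3|x|. Consequently the function V₁(x) = 5x² + 3|x| satisfies V₁(x) = min_{u ∈ ℝ} ( x² + u² + |x − u| + V₁(2x + u) ) for all |x| ≤ 1/2. -/
/-! On `|x| ≤ 1/2` the control `u = -2x` drives the state to `0`, and in the variable
`w = 2x + u` the cost is `5x² + 6w² - 4xw + |3x - w| + 3|w|`. The reverse triangle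
inequality gives `|3x - w| ≥ 3|x| - |w|`, and `|x| ≤ 1/2` gives `4xw ≤ 2|w|`, so every
other control costs at least `5x² + 3|x|`. -/

namespace Tracking

def valueOne (x : ℝ) : ℝ := 5 * x ^ 2 + 3 * |x|

def stageCost (x u : ℝ) : ℝ := x ^ 2 + u ^ 2 + |x - u|

/-- The Bellman right-hand side for the dynamics `x ↦ 2x + u` with terminal value `valueOne`. -/
def bellmanCost (x u : ℝ) : ℝ := stageCost x u + valueOne (2 * x + u)

theorem bellmanCost_neg_two_mul (x : ℝ) : bellmanCost x (-(2 * x)) = valueOne x := by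
  have h : |x - -(2 * x)| = 3 * |x| := by
    rw [show x - -(2 * x) = 3 * x by ring, abs_mul, abs_of_pos three_pos]
  simp only [bellmanCost, stageCost, valueOne, h, add_neg_cancel, abs_zero]
  ring

theorem bellmanCost_eq_of_add_eq (x u w : ℝ) (hw : 2 * x + u = w) :
    bellmanCost x u = 5 * x ^ 2 + 6 * w ^ 2 - 4 * x * w + |3 * x - w| + 3 * |w| := by
  obtain rfl : u = w - 2 * x := by linarith
  simp only [bellmanCost, stageCost, valueOne, show x - (w - 2 * x) = 3 * x - w by ring,
    show 2 * x + (w - 2 * x) = w by ring]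
  ring

theorem mul_le_abs_of_abs_le_half {x w : ℝ} (hx : |x| ≤ 1 / 2) : 4 * x * w ≤ 2 * |w| :=
  calc 4 * x * w ≤ 4 * (|x| * |w|) := by
        rw [mul_assoc, ← abs_mul]; exact mul_le_mul_of_nonneg_left (le_abs_self _) (by norm_num)
    _ ≤ 4 * (1 / 2 * |w|) := by gcongr
    _ = 2 * |w| := by ring

theorem valueOne_le_bellmanCost {x : ℝ} (hx : |x| ≤ 1 / 2) (u : ℝ) :
    valueOne x ≤ bellmanCost x u := by
  rw [bellmanCost_eq_of_add_eq x u _ rfl]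
  set w := 2 * x + u
  have hrev : 3 * |x| - |w| ≤ |3 * x - w| := by
    simpa [abs_mul] using abs_sub_abs_le_abs_sub (3 * x) w
  have hcross := mul_le_abs_of_abs_le_half (w := w) hx
  unfold valueOne
  linarith [sq_nonneg w]

end Tracking

open Tracking in
theorem tracking_bellman_piece_one :
    ∀ x : ℝ, |x| ≤ 1 / 2 →
      (x ^ 2 + (-(2 * x)) ^ 2 + |x - -(2 * x)|
          + 5 * (2 * x + -(2 * x)) ^ 2 + 3 * |2 * x + -(2 * x)| = 5 * x ^ 2 + 3 * |x|) ∧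
      IsLeast
        {y : ℝ | ∃ u : ℝ,
          y = x ^ 2 + u ^ 2 + |x - u| + 5 * (2 * x + u) ^ 2 + 3 * |2 * x + u|}
        (5 * x ^ 2 + 3 * |x|) := by
  intro x hx
  have hcost (u : ℝ) :
      x ^ 2 + u ^ 2 + |x - u| + 5 * (2 * x + u) ^ 2 + 3 * |2 * x + u| = bellmanCost x u := by
    simp only [bellmanCost, stageCost, valueOne]; ring
  simp only [hcost]
  refine ⟨bellmanCost_neg_two_mul x, ⟨-(2 * x), (bellmanCost_neg_two_mul x).symm⟩, ?_⟩
  rintro _ ⟨u, rfl⟩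
  exact valueOne_le_bellmanCost hx u
end

section
/- For every x ∈ ℝ with 1/2 ≤ x ≤ 2, the function f(u) = x² + u² + |x − u| + 5(2x + u)² + 3|2x + u| attains its global minimum over u ∈ ℝ at u = −(10x + 1)/6, the resulting next state 2x + u = (2x − 1)/6 lies in [0, 1/2], and the minimum value equals (26x² + 22x − 1)/6. Equivalently, with V₁(y) = 5y² + 3|y|, one has min_{u ∈ ℝ} ( x² + u² + |x − u| + V₁(2x + u) ) = (26x² + 22x − 1)/6 for all x ∈ [1/2, 2]. -/
/-!
Replacing `|x - u|` and `|2x + u|` by `x - u` and `2x + u` gives a quadratic minorant of the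
objective, namely `(26x² + 22x - 1)/6 + 6 (u - u*)²` with `u* = -(10x + 1)/6`. For `x ≥ 1/2` both
arguments are nonnegative at `u*`, so the minorant touches the objective there, and `u*` is a
global minimiser with the stated value.
-/

lemma linearized_le_objective (x u : ℝ) :
    x ^ 2 + u ^ 2 + (x - u) + 5 * (2 * x + u) ^ 2 + 3 * (2 * x + u) ≤
      x ^ 2 + u ^ 2 + |x - u| + 5 * (2 * x + u) ^ 2 + 3 * |2 * x + u| := by
  gcongr <;> exact le_abs_self _

lemma objective_eq_linearized {x u : ℝ} (hxu : u ≤ x) (hy : 0 ≤ 2 * x + u) :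
    x ^ 2 + u ^ 2 + |x - u| + 5 * (2 * x + u) ^ 2 + 3 * |2 * x + u| =
      x ^ 2 + u ^ 2 + (x - u) + 5 * (2 * x + u) ^ 2 + 3 * (2 * x + u) := by
  rw [abs_of_nonneg (sub_nonneg.mpr hxu), abs_of_nonneg hy]

lemma linearized_eq_add_sq (x u : ℝ) :
    x ^ 2 + u ^ 2 + (x - u) + 5 * (2 * x + u) ^ 2 + 3 * (2 * x + u) =
      (26 * x ^ 2 + 22 * x - 1) / 6 + 6 * (u - -(10 * x + 1) / 6) ^ 2 := by
  ring

theorem tracking_bellman_piece_two :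
    ∀ x : ℝ, 1 / 2 ≤ x → x ≤ 2 →
      (x ^ 2 + (-(10 * x + 1) / 6) ^ 2 + |x - -(10 * x + 1) / 6|
          + 5 * (2 * x + -(10 * x + 1) / 6) ^ 2 + 3 * |2 * x + -(10 * x + 1) / 6| =
        (26 * x ^ 2 + 22 * x - 1) / 6) ∧
      (∀ u : ℝ, (26 * x ^ 2 + 22 * x - 1) / 6 ≤
        x ^ 2 + u ^ 2 + |x - u| + 5 * (2 * x + u) ^ 2 + 3 * |2 * x + u|) ∧
      2 * x + -(10 * x + 1) / 6 = (2 * x - 1) / 6 ∧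
      0 ≤ (2 * x - 1) / 6 ∧ (2 * x - 1) / 6 ≤ 1 / 2 := by
  intro x hx₁ hx₂
  have hnext : 2 * x + -(10 * x + 1) / 6 = (2 * x - 1) / 6 := by ring
  refine ⟨?_, fun u => ?_, hnext, by linarith, by linarith⟩
  · rw [objective_eq_linearized (by linarith) (by linarith), linearized_eq_add_sq]
    simp
  · calc (26 * x ^ 2 + 22 * x - 1) / 6
        ≤ (26 * x ^ 2 + 22 * x - 1) / 6 + 6 * (u - -(10 * x + 1) / 6) ^ 2 :=
          le_add_of_nonneg_right (by positivity)
      _ = _ := (linearized_eq_add_sq x u).symm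
      _ ≤ _ := linearized_le_objective x u
end

section
/- Consider the scalar system x_{k+1} = 2 x_k + u_k with initial state x_0 = x where |x| ≤ 1/2, and the control sequence u_0 = −2x, u_k = 0 for all k ≥ 1. Then x_k = 0 for all k ≥ 1, and the infinite-horizon cost ∑_{k=0}^∞ ( x_k² + u_k² + |x_k − u_k| ) converges and equals 5x² + 3|x|. -/
theorem deadbeat_state_eq_zero {R : Type*} [Ring R] (a : R) (x u : ℕ → R)
    (hxrec : ∀ k, x (k + 1) = a * x k + u k) (hu0 : u 0 = -(a * x 0))
    (hu : ∀ k, 1 ≤ k → u k = 0) :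
    ∀ k, 1 ≤ k → x k = 0 := by
  intro k hk
  induction k, hk using Nat.le_induction with
  | base => rw [hxrec, hu0, add_neg_cancel]
  | succ n hn ih => rw [hxrec, ih, hu n hn, mul_zero, add_zero]

theorem deadbeat_stage_cost (x₀ : ℝ) :
    x₀ ^ 2 + (-(2 * x₀)) ^ 2 + |x₀ - -(2 * x₀)| = 5 * x₀ ^ 2 + 3 * |x₀| := by
  rw [show x₀ - -(2 * x₀) = 3 * x₀ by ring, abs_mul, abs_of_pos three_pos]
  ring

theorem tracking_value_attained_piece_one_general
    (x₀ : ℝ)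
    (x u : ℕ → ℝ)
    (hx0 : x 0 = x₀)
    (hxrec : ∀ k : ℕ, x (k + 1) = 2 * x k + u k)
    (hu0 : u 0 = -(2 * x₀))
    (hu : ∀ k : ℕ, 1 ≤ k → u k = 0) :
    (∀ k : ℕ, 1 ≤ k → x k = 0) ∧
      HasSum (fun k : ℕ => (x k) ^ 2 + (u k) ^ 2 + |x k - u k|)
        (5 * x₀ ^ 2 + 3 * |x₀|) := by
  have hxz := deadbeat_state_eq_zero 2 x u hxrec (hx0 ▸ hu0) hu
  refine ⟨hxz, ?_⟩
  have hsum := hasSum_single (f := fun k : ℕ => (x k) ^ 2 + (u k) ^ 2 + |x k - u k|) 0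
    fun k hk => by
      have hk1 : 1 ≤ k := Nat.one_le_iff_ne_zero.mpr hk
      simp [hxz k hk1, hu k hk1]
  rwa [hx0, hu0, deadbeat_stage_cost] at hsum

theorem tracking_value_attained_piece_one
    (x₀ : ℝ) (hx₀ : |x₀| ≤ 1 / 2)
    (x u : ℕ → ℝ)
    (hx0 : x 0 = x₀)
    (hxrec : ∀ k : ℕ, x (k + 1) = 2 * x k + u k)
    (hu0 : u 0 = -(2 * x₀))
    (hu : ∀ k : ℕ, 1 ≤ k → u k = 0) :
    (∀ k : ℕ, 1 ≤ k → x k = 0) ∧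
      HasSum (fun k : ℕ => (x k) ^ 2 + (u k) ^ 2 + |x k - u k|)
        (5 * x₀ ^ 2 + 3 * |x₀|) :=
  tracking_value_attained_piece_one_general x₀ x u hx0 hxrec hu0 hu
end
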